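/- arXiv:2508.13824 — 2 statements merged into one kernel-verified Lean document; each statement's English description precedes it below -/
import Mathlib

section
/- (Simplifying condition C(N) for the IRK-GL-ADER-DG method.) Under the Gauss–Legendre quadrature property, for all 0 ≤ p ≤ N and all integers r with 0 ≤ r ≤ N − 1 one has Σ_{q=0}^{N} κ_{pq} τ_q^{r+1} = (r+1) w_p τ_p^{r}. Equivalently, if κ is invertible and a = κ⁻¹ · diag(w), then Σ_{q=0}^{N} a_{pq} τ_q^{r} = τ_p^{r+1}/(r+1) for all 0 ≤ p ≤ N and 0 ≤ r ≤ N − 1; in particular Σ_{q=0}^{N} a_{pq} = τ_p. -/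
open Finset Polynomial Lagrange intervalIntegral
open scoped Matrix

/-!
Since the nodes are distinct, every polynomial `g` of degree `≤ N` is its own Lagrange
interpolant, so `∑_q κ_{pq} g(τ_q) = ψ̃_p g(1) - ∫₀¹ φ_p' g`. Integrating by parts turns this
into `ψ_p g(0) + ∫₀¹ φ_p g'`, and since `φ_p g'` has degree `< 2N + 1` the Gauss–Legendre rule
evaluates the integral exactly as `w_p g'(τ_p)`. Taking `g = X^(r+1)` gives condition `C(N)`;
the statement about `a = κ⁻¹ diag(w)` is the same identity after multiplying by `κ⁻¹`.
-/

theorem Polynomial.integral_derivative_mul_eval (P Q : ℝ[X]) (a b : ℝ) :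
    ∫ x in a..b, P.derivative.eval x * Q.eval x =
      P.eval b * Q.eval b - P.eval a * Q.eval a - ∫ x in a..b, P.eval x * Q.derivative.eval x := by
  have := integral_mul_deriv_eq_deriv_mul (fun x _ => Q.hasDerivAt x) (fun x _ => P.hasDerivAt x)
    (Q.derivative.continuous.intervalIntegrable a b) (P.derivative.continuous.intervalIntegrable a b)
  simp_rw [mul_comm (P.derivative.eval _), mul_comm (P.eval _)]
  exact this

theorem Matrix.inv_mul_mulVec_eq_of_mulVec_eq {n R : Type*} [Fintype n] [DecidableEq n]
    [CommRing R] {A B : Matrix n n R} (hA : IsUnit A.det) {u v : n → R}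
    (h : A *ᵥ u = B *ᵥ v) : (A⁻¹ * B) *ᵥ v = u := by
  rw [← Matrix.mulVec_mulVec, ← h, Matrix.mulVec_mulVec, Matrix.nonsing_inv_mul A hA,
    Matrix.one_mulVec]

namespace Lagrange

variable {F ι : Type*} [Field F] [DecidableEq ι] {s : Finset ι} {v : ι → F}

theorem eval_basis (i : ι) (x : F) :
    (Lagrange.basis s v i).eval x = ∏ j ∈ s.erase i, (x - v j) / (v i - v j) := by
  simp only [Lagrange.basis, eval_prod, basisDivisor, eval_mul, eval_C, eval_sub, eval_X]
  exact prod_congr rfl fun j _ => by rw [div_eq_mul_inv, mul_comm]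

theorem sum_eval_mul_eval_basis (hvs : Set.InjOn v s) {f : F[X]} (hf : f.degree < #s) (x : F) :
    ∑ i ∈ s, f.eval (v i) * (Lagrange.basis s v i).eval x = f.eval x := by
  conv_rhs => rw [eq_interpolate hvs hf, interpolate_apply]
  simp only [eval_finsetSum, eval_mul, eval_C]

end Lagrange

section GaussLegendre

variable {N : ℕ} {τ : Fin (N + 1) → ℝ}

noncomputable def kappaMatrix (τ : Fin (N + 1) → ℝ) : Matrix (Fin (N + 1)) (Fin (N + 1)) ℝ :=
  Matrix.of fun p q => (Lagrange.basis univ τ p).eval 1 * (Lagrange.basis univ τ q).eval 1 -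
    ∫ x in (0:ℝ)..1, (Lagrange.basis univ τ p).derivative.eval x * (Lagrange.basis univ τ q).eval x

theorem sum_eval_mul_eval_basis_of_natDegree_le (hτ : Function.Injective τ) {g : ℝ[X]}
    (hg : g.natDegree ≤ N) (x : ℝ) :
    ∑ q, g.eval (τ q) * (Lagrange.basis univ τ q).eval x = g.eval x := by
  refine sum_eval_mul_eval_basis hτ.injOn ((degree_le_natDegree).trans_lt ?_) x
  rw [card_univ, Fintype.card_fin]
  exact_mod_cast Nat.lt_succ_of_le hg

theorem sum_eval_mul_integral_mul_basis (hτ : Function.Injective τ) {g : ℝ[X]}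
    (hg : g.natDegree ≤ N) (P : ℝ[X]) :
    ∑ q, g.eval (τ q) * ∫ x in (0:ℝ)..1, P.eval x * (Lagrange.basis univ τ q).eval x =
      ∫ x in (0:ℝ)..1, P.eval x * g.eval x := by
  simp_rw [← integral_const_mul]
  rw [← integral_finsetSum
    (f := fun q x => g.eval (τ q) * (P.eval x * (Lagrange.basis univ τ q).eval x)) fun q _ =>
      (continuous_const.mul (P.continuous.mul (Lagrange.basis univ τ q).continuous)).intervalIntegrable
        0 1]
  congr 1 with x
  rw [← sum_eval_mul_eval_basis_of_natDegree_le hτ hg x, mul_sum]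
  exact sum_congr rfl fun q _ => by ring

theorem integral_basis_mul_eval (hτ : Function.Injective τ) {w : Fin (N + 1) → ℝ}
    (hGL : ∀ g : ℝ[X], g.natDegree ≤ 2 * N + 1 →
      (∫ x in (0:ℝ)..1, g.eval x) = ∑ p, w p * g.eval (τ p))
    (p : Fin (N + 1)) {h : ℝ[X]} (hh : h.natDegree ≤ N + 1) :
    ∫ x in (0:ℝ)..1, (Lagrange.basis univ τ p).eval x * h.eval x = w p * h.eval (τ p) := by
  have hdeg : (Lagrange.basis univ τ p * h).natDegree ≤ 2 * N + 1 := by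
    refine natDegree_mul_le.trans ?_
    rw [natDegree_basis hτ.injOn (mem_univ p), card_univ, Fintype.card_fin]
    omega
  simp only [← eval_mul]
  rw [hGL _ hdeg, sum_eq_single p
    (fun q _ hqp => by rw [eval_mul, eval_basis_of_ne (Ne.symm hqp) (mem_univ q)]; ring)
    (fun hp => absurd (mem_univ p) hp), eval_mul, eval_basis_self hτ.injOn (mem_univ p)]
  ring

theorem sum_kappaMatrix_mul_eval (hτ : Function.Injective τ) {w : Fin (N + 1) → ℝ}
    (hGL : ∀ g : ℝ[X], g.natDegree ≤ 2 * N + 1 →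
      (∫ x in (0:ℝ)..1, g.eval x) = ∑ p, w p * g.eval (τ p))
    (p : Fin (N + 1)) {g : ℝ[X]} (hg : g.natDegree ≤ N) :
    ∑ q, kappaMatrix τ p q * g.eval (τ q) =
      (Lagrange.basis univ τ p).eval 0 * g.eval 0 + w p * g.derivative.eval (τ p) := by
  set L := Lagrange.basis univ τ p
  have hg' : g.derivative.natDegree ≤ N + 1 := (natDegree_derivative_le g).trans (by omega)
  calc ∑ q, kappaMatrix τ p q * g.eval (τ q)
      = L.eval 1 * ∑ q, g.eval (τ q) * (Lagrange.basis univ τ q).eval 1 -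
          ∑ q, g.eval (τ q) *
            ∫ x in (0:ℝ)..1, L.derivative.eval x * (Lagrange.basis univ τ q).eval x := by
        rw [mul_sum, ← sum_sub_distrib]
        exact sum_congr rfl fun q _ => by simp only [kappaMatrix, Matrix.of_apply, L]; ring
    _ = L.eval 1 * g.eval 1 - ∫ x in (0:ℝ)..1, L.derivative.eval x * g.eval x := by
        rw [sum_eval_mul_eval_basis_of_natDegree_le hτ hg,
          sum_eval_mul_integral_mul_basis hτ hg]
    _ = L.eval 0 * g.eval 0 + w p * g.derivative.eval (τ p) := by
        rw [integral_derivative_mul_eval, integral_basis_mul_eval hτ hGL p hg']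
        ring

end GaussLegendre

theorem aderdg_simplifying_condition_C_general
    (N : ℕ) (τ : Fin (N + 1) → ℝ) (hτ : Function.Injective τ)
    (φ : Fin (N + 1) → ℝ → ℝ)
    (hφ : ∀ p x, φ p x = ∏ k ∈ Finset.univ.erase p, (x - τ k) / (τ p - τ k))
    (ψt w : Fin (N + 1) → ℝ)
    (hψt : ∀ p, ψt p = φ p 1)
    (κ : Matrix (Fin (N + 1)) (Fin (N + 1)) ℝ)
    (hκ : ∀ p q, κ p q = ψt p * ψt q - ∫ x in (0:ℝ)..1, deriv (φ p) x * φ q x)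
    (hGL : ∀ g : Polynomial ℝ, g.natDegree ≤ 2 * N + 1 →
      (∫ x in (0:ℝ)..1, g.eval x) = ∑ p, w p * g.eval (τ p)) :
    (∀ p, ∀ r : ℕ, r < N →
        ∑ q, κ p q * τ q ^ (r + 1) = (r + 1 : ℝ) * w p * τ p ^ r) ∧
      (IsUnit κ.det →
        (∀ p, ∀ r : ℕ, r < N →
            ∑ q, (κ⁻¹ * Matrix.diagonal w) p q * τ q ^ r =
              τ p ^ (r + 1) / (r + 1 : ℝ)) ∧
          (0 < N → ∀ p, ∑ q, (κ⁻¹ * Matrix.diagonal w) p q = τ p)) := by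
  obtain rfl : φ = fun p x => (Lagrange.basis univ τ p).eval x :=
    funext₂ fun p x => by rw [hφ, eval_basis]
  obtain rfl : κ = kappaMatrix τ := Matrix.ext fun p q => by
    simp only [hκ, hψt, kappaMatrix, Matrix.of_apply, Polynomial.deriv]
  have condC : ∀ p, ∀ r : ℕ, r < N →
      ∑ q, kappaMatrix τ p q * τ q ^ (r + 1) = (r + 1 : ℝ) * w p * τ p ^ r := fun p r hr => by
    have := sum_kappaMatrix_mul_eval hτ hGL p (g := X ^ (r + 1)) (by simpa using hr)
    simp only [eval_pow, eval_X, derivative_X_pow, eval_mul, eval_C, add_tsub_cancel_right] at this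
    rw [this, zero_pow (Nat.succ_ne_zero r)]
    push_cast
    ring
  refine ⟨condC, fun hdet => ?_⟩
  have condC_inv : ∀ p, ∀ r : ℕ, r < N →
      ∑ q, ((kappaMatrix τ)⁻¹ * Matrix.diagonal w) p q * τ q ^ r =
        τ p ^ (r + 1) / (r + 1 : ℝ) := fun p r hr => by
    have hκu : kappaMatrix τ *ᵥ (fun q => τ q ^ (r + 1) / (r + 1 : ℝ)) =
        Matrix.diagonal w *ᵥ fun q => τ q ^ r := funext fun p => by
      rw [Matrix.mulVec_diagonal]
      simp only [Matrix.mulVec, dotProduct, mul_div_assoc', ← sum_div, condC p r hr]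
      field_simp
    exact congrFun (Matrix.inv_mul_mulVec_eq_of_mulVec_eq hdet hκu) p
  exact ⟨condC_inv, fun hN p => by simpa using condC_inv p 0 hN⟩

/-- Simplifying condition C(N) for the IRK-GL-ADER-DG method:
Σ_q κ_{pq} τ_q^{r+1} = (r+1) w_p τ_p^r for 0 ≤ r ≤ N−1; equivalently, if κ is
invertible and a = κ⁻¹ diag(w), then Σ_q a_{pq} τ_q^r = τ_p^{r+1}/(r+1); in
particular Σ_q a_{pq} = τ_p. -/
theorem aderdg_simplifying_condition_C
    (N : ℕ) (τ : Fin (N + 1) → ℝ) (hτ : Function.Injective τ)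
    (hτ01 : ∀ p, τ p ∈ Set.Icc (0:ℝ) 1)
    (φ : Fin (N + 1) → ℝ → ℝ)
    (hφ : ∀ p x, φ p x = ∏ k ∈ Finset.univ.erase p, (x - τ k) / (τ p - τ k))
    (ψ ψt w : Fin (N + 1) → ℝ)
    (hψ : ∀ p, ψ p = φ p 0) (hψt : ∀ p, ψt p = φ p 1)
    (hw : ∀ p, w p = ∫ x in (0:ℝ)..1, φ p x)
    (κ : Matrix (Fin (N + 1)) (Fin (N + 1)) ℝ)
    (hκ : ∀ p q, κ p q = ψt p * ψt q - ∫ x in (0:ℝ)..1, deriv (φ p) x * φ q x)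
    (hGL : ∀ g : Polynomial ℝ, g.natDegree ≤ 2 * N + 1 →
      (∫ x in (0:ℝ)..1, g.eval x) = ∑ p, w p * g.eval (τ p)) :
    (∀ p, ∀ r : ℕ, r < N →
        ∑ q, κ p q * τ q ^ (r + 1) = (r + 1 : ℝ) * w p * τ p ^ r) ∧
      (IsUnit κ.det →
        (∀ p, ∀ r : ℕ, r < N →
            ∑ q, (κ⁻¹ * Matrix.diagonal w) p q * τ q ^ r =
              τ p ^ (r + 1) / (r + 1 : ℝ)) ∧
          (0 < N → ∀ p, ∑ q, (κ⁻¹ * Matrix.diagonal w) p q = τ p)) :=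
  aderdg_simplifying_condition_C_general N τ hτ φ hφ ψt w hψt κ hκ hGL
end

section
/- Assume κ is invertible and every weight w_p is nonzero, let a = κ⁻¹ · diag(w), let 𝟙 ∈ ℝ^{N+1} be the all-ones vector and w the weight vector. Then the kernel of the matrix a − 𝟙 wᵀ is the one-dimensional span of the vector c with entries c_p = ψ_p / w_p, and hence rank(a − 𝟙 wᵀ) = N; in particular det(a − 𝟙 wᵀ) = 0. -/
open scoped BigOperators
open Matrix Polynomial

/-!
Since the Lagrange basis is a partition of unity, integrating by parts gives `κ 𝟙 = ψ`,
i.e. `a c = 𝟙` for `c = ψ / w`, while `w ⬝ c = ∑ ψ = 1`. For an invertible `a` and vectors with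
`a c = u`, `w ⬝ c = 1`, the rank-one perturbation `a - u wᵀ` sends `v` to `a (v - (w ⬝ v) c)`,
so its kernel is exactly the line spanned by `c`.
-/

theorem Lagrange.eval_basis_s13 {F ι : Type*} [Field F] [DecidableEq ι] (s : Finset ι) (τ : ι → F)
    (p : ι) (x : F) :
    (Lagrange.basis s τ p).eval x = ∏ k ∈ s.erase p, (x - τ k) / (τ p - τ k) := by
  simp only [Lagrange.basis, Lagrange.basisDivisor, eval_prod, eval_mul, eval_sub, eval_C, eval_X]
  exact Finset.prod_congr rfl fun k _ => by rw [div_eq_mul_inv, mul_comm]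

theorem Polynomial.sum_eval_mul_eval_sub_integral_derivative_mul {ι : Type*} {s : Finset ι}
    {P : ι → ℝ[X]} (hP : ∑ q ∈ s, P q = 1) (Q : ℝ[X]) (a b : ℝ) :
    ∑ q ∈ s, (Q.eval b * (P q).eval b - ∫ x in a..b, Q.derivative.eval x * (P q).eval x) =
      Q.eval a := by
  have hPx (x : ℝ) : ∑ q ∈ s, (P q).eval x = 1 := by
    simpa [eval_finsetSum] using congrArg (eval x) hP
  have hint : ∑ q ∈ s, ∫ x in a..b, Q.derivative.eval x * (P q).eval x =
      ∫ x in a..b, Q.derivative.eval x := by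
    rw [← intervalIntegral.integral_finsetSum fun q _ => by
      exact (Q.derivative.continuous.mul (P q).continuous).intervalIntegrable a b]
    simp_rw [← Finset.mul_sum, hPx, mul_one]
  have hFTC : ∫ x in a..b, Q.derivative.eval x = Q.eval b - Q.eval a :=
    intervalIntegral.integral_eq_sub_of_hasDerivAt (fun x _ => Q.hasDerivAt x)
      (Q.derivative.continuous.intervalIntegrable a b)
  rw [Finset.sum_sub_distrib, ← Finset.mul_sum, hPx, hint, hFTC]
  ring

namespace Matrix

theorem mulVec_sub_vecMulVec_eq_zero_iff {R n : Type*} [CommRing R] [Fintype n] [DecidableEq n]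
    {A : Matrix n n R} (hA : IsUnit A.det) {u w c : n → R} (hc : A *ᵥ c = u)
    (hwc : w ⬝ᵥ c = 1) (v : n → R) :
    (A - vecMulVec u w) *ᵥ v = 0 ↔ ∃ t : R, v = t • c := by
  have hB : (A - vecMulVec u w) *ᵥ v = A *ᵥ (v - (w ⬝ᵥ v) • c) := by
    rw [sub_mulVec, mulVec_sub, mulVec_smul, hc]
    congr 1
    ext i
    simp [vecMulVec_apply, mulVec, dotProduct, Finset.mul_sum, mul_comm, mul_left_comm]
  rw [hB]
  constructor
  · intro h
    refine ⟨w ⬝ᵥ v, sub_eq_zero.mp ?_⟩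
    exact mulVec_injective_of_det_mem_nonZeroDivisors hA.mem_nonZeroDivisors (by rwa [mulVec_zero])
  · rintro ⟨t, rfl⟩
    rw [dotProduct_smul, hwc, smul_eq_mul, mul_one, sub_self, mulVec_zero]

theorem rank_add_one_of_mulVec_eq_zero_iff {K m n : Type*} [Field K] [Fintype m] [Fintype n]
    {B : Matrix m n K} {c : n → K} (hc : c ≠ 0)
    (hker : ∀ v, B *ᵥ v = 0 ↔ ∃ t : K, v = t • c) :
    B.rank + 1 = Fintype.card n := by
  have hspan : LinearMap.ker B.mulVecLin = Submodule.span K {c} := by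
    ext v
    simp only [LinearMap.mem_ker, mulVecLin_apply, Submodule.mem_span_singleton, hker, eq_comm]
  have := LinearMap.finrank_range_add_finrank_ker B.mulVecLin
  rwa [hspan, finrank_span_singleton hc, Module.finrank_fintype_fun_eq_card] at this

end Matrix

theorem aderdg_kernel_of_a_sub_one_wT_general
    (N : ℕ) (τ : Fin (N + 1) → ℝ) (hτ : Function.Injective τ)
    (φ : Fin (N + 1) → ℝ → ℝ)
    (hφ : ∀ p x, φ p x = ∏ k ∈ Finset.univ.erase p, (x - τ k) / (τ p - τ k))
    (ψ ψt w : Fin (N + 1) → ℝ)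
    (hψ : ∀ p, ψ p = φ p 0) (hψt : ∀ p, ψt p = φ p 1)
    (κ : Matrix (Fin (N + 1)) (Fin (N + 1)) ℝ)
    (hκ : ∀ p q, κ p q = ψt p * ψt q - ∫ x in (0:ℝ)..1, deriv (φ p) x * φ q x)
    (hinv : IsUnit κ.det) (hwne : ∀ p, w p ≠ 0)
    (a B : Matrix (Fin (N + 1)) (Fin (N + 1)) ℝ)
    (ha : a = κ⁻¹ * Matrix.diagonal w)
    (hB : B = a - Matrix.vecMulVec (fun _ => (1:ℝ)) w) :
    (∀ v : Fin (N + 1) → ℝ,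
        B.mulVec v = 0 ↔ ∃ t : ℝ, v = t • fun p => ψ p / w p) ∧
      B.rank = N ∧ B.det = 0 := by
  set P := Lagrange.basis Finset.univ τ
  set c : Fin (N + 1) → ℝ := fun p => ψ p / w p
  have hφP (p : Fin (N + 1)) : φ p = fun x => (P p).eval x := by
    funext x; rw [hφ, Lagrange.eval_basis_s13]
  have hP : ∑ q, P q = 1 := Lagrange.sum_basis hτ.injOn Finset.univ_nonempty
  have hκ_one : κ *ᵥ 1 = ψ := by
    funext p
    simp only [mulVec, dotProduct, Pi.one_apply, mul_one, hκ, hψt, hψ, hφP, Polynomial.deriv]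
    exact sum_eval_mul_eval_sub_integral_derivative_mul hP (P p) 0 1
  have hwc : w ⬝ᵥ c = 1 := by
    simpa [dotProduct, c, mul_div_cancel₀ _ (hwne _), hψ, hφP, eval_finsetSum]
      using congrArg (eval 0) hP
  have hdiag_c : diagonal w *ᵥ c = ψ := by
    funext p; simp [mulVec_diagonal, c, mul_div_cancel₀ _ (hwne p)]
  have ha_det : IsUnit a.det := by
    rw [ha, det_mul, det_diagonal]
    exact (isUnit_nonsing_inv_det κ hinv).mul
      (Finset.prod_ne_zero_iff.mpr fun p _ => hwne p).isUnit
  have hac : a *ᵥ c = fun _ => 1 := by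
    rw [ha, ← mulVec_mulVec, hdiag_c, ← hκ_one, mulVec_mulVec, nonsing_inv_mul κ hinv,
      one_mulVec]
    rfl
  have hker := mulVec_sub_vecMulVec_eq_zero_iff ha_det hac hwc
  have hc : c ≠ 0 := fun h => by simp [h] at hwc
  subst hB
  refine ⟨hker, ?_, ?_⟩
  · have := rank_add_one_of_mulVec_eq_zero_iff hc hker
    rw [Fintype.card_fin] at this
    omega
  · exact exists_mulVec_eq_zero_iff.mp ⟨c, hc, (hker c).mpr ⟨1, (one_smul _ _).symm⟩⟩

/-- The kernel of a − 𝟙wᵀ is the one-dimensional span of the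
vector c with c_p = ψ_p / w_p; hence rank(a − 𝟙wᵀ) = N and det(a − 𝟙wᵀ) = 0. -/
theorem aderdg_kernel_of_a_sub_one_wT
    (N : ℕ) (τ : Fin (N + 1) → ℝ) (hτ : Function.Injective τ)
    (φ : Fin (N + 1) → ℝ → ℝ)
    (hφ : ∀ p x, φ p x = ∏ k ∈ Finset.univ.erase p, (x - τ k) / (τ p - τ k))
    (ψ ψt w : Fin (N + 1) → ℝ)
    (hψ : ∀ p, ψ p = φ p 0) (hψt : ∀ p, ψt p = φ p 1)
    (hw : ∀ p, w p = ∫ x in (0:ℝ)..1, φ p x)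
    (κ : Matrix (Fin (N + 1)) (Fin (N + 1)) ℝ)
    (hκ : ∀ p q, κ p q = ψt p * ψt q - ∫ x in (0:ℝ)..1, deriv (φ p) x * φ q x)
    (hinv : IsUnit κ.det) (hwne : ∀ p, w p ≠ 0)
    (a B : Matrix (Fin (N + 1)) (Fin (N + 1)) ℝ)
    (ha : a = κ⁻¹ * Matrix.diagonal w)
    (hB : B = a - Matrix.vecMulVec (fun _ => (1:ℝ)) w) :
    (∀ v : Fin (N + 1) → ℝ,
        B.mulVec v = 0 ↔ ∃ t : ℝ, v = t • fun p => ψ p / w p) ∧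
      B.rank = N ∧ B.det = 0 :=
  aderdg_kernel_of_a_sub_one_wT_general N τ hτ φ hφ ψ ψt w hψ hψt κ hκ hinv hwne a B ha hB
end
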